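/- For 0 < x < 1, Li_{3,1}(x) + Li_{3,1}(1-x) = ln(x)*(ζ(3) - Li_3(1-x) + ln(1-x)*Li_2(1-x)) + ζ(3,1) + ln(1-x)*Li_{2,1}(1-x) + (1/4)*ln^2(x)*ln^2(1-x), where ζ(3,1) = π^4/360. -/

import Mathlib

/-!
Write every function as a power series `∑ aₙ x^(n+1)`. Termwise differentiation gives
`Li₂' = -log(1-x)/x`, `Li₃' = Li₂/x`, `Li₃,₁' = Li₂,₁/x` and `Li₂,₁' = log²(1-x)/(2x)`, the last
because squaring `-log(1-x) = ∑ x^(n+1)/(n+1)` as a Cauchy product gives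
`∑ 2 H_{n+1}/(n+2) x^(n+2)`. Hence
`Li₂,₁(x) - (ζ(3) - Li₃(1-x) + log(1-x) Li₂(1-x) + ½ log x log²(1-x))` and the symmetric combination
`Li₃,₁(x) + Li₃,₁(1-x) - log x Li₂,₁(x) - log(1-x) Li₂,₁(1-x) + ¼ log²x log²(1-x)` are constant on
`(0,1)`; letting `x → 0⁺` (where `x log x → 0` and `log(1-x) = O(x)`) the constants are `0` and
`ζ(3,1)`, and substituting the first identity into the second gives the formula.

For `ζ(3,1)`, expand `ζ(2)²` in two ways: as `ζ(4) + 2ζ(2,2)` (diagonal plus off-diagonal terms),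
and as a Cauchy product using `1/(a²b²) = (1/a² + 1/b²)/(a+b)² + 2(1/a + 1/b)/(a+b)³`, which gives
`2ζ(2,2) + 4ζ(3,1)`. So `ζ(3,1) = ζ(4)/4 = π⁴/360`.
-/

open Real Finset

noncomputable def H (n : ℕ) : ℝ := ∑ k ∈ Finset.range n, 1 / ((k : ℝ) + 1)

noncomputable def H2 (n : ℕ) : ℝ := ∑ k ∈ Finset.range n, 1 / ((k : ℝ) + 1) ^ 2

noncomputable def zeta11 (n : ℕ) : ℝ :=
  ∑ k ∈ Finset.range n, ∑ j ∈ Finset.range k, 1 / (((k : ℝ) + 1) * ((j : ℝ) + 1))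

noncomputable def Li (m : ℕ) (x : ℝ) : ℝ := ∑' n : ℕ, x ^ (n + 1) / ((n : ℝ) + 1) ^ m

noncomputable def Li21 (x : ℝ) : ℝ := ∑' n : ℕ, x ^ (n + 1) * H n / ((n : ℝ) + 1) ^ 2

noncomputable def Li31 (x : ℝ) : ℝ := ∑' n : ℕ, x ^ (n + 1) * H n / ((n : ℝ) + 1) ^ 3

noncomputable def zeta3 : ℝ := ∑' n : ℕ, 1 / ((n : ℝ) + 1) ^ 3

noncomputable def zeta31 : ℝ := ∑' n : ℕ, H n / ((n : ℝ) + 1) ^ 3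

open Filter Set Topology Asymptotics

lemma hasSum_of_hasSum_succ {G : Type*} [AddCommGroup G] [TopologicalSpace G]
    [IsTopologicalAddGroup G] {f : ℕ → G} {s : G} (h0 : f 0 = 0)
    (h : HasSum (fun n => f (n + 1)) s) : HasSum f s :=
  (hasSum_nat_add_iff' 1).mp (by simpa [h0] using h)

lemma hasSum_sum_antidiagonal_mul_self {R : Type*} [NormedRing R] [CompleteSpace R] {f : ℕ → R}
    {s : R} (hf : HasSum f s) (hnorm : Summable fun n => ‖f n‖) :
    HasSum (fun n => ∑ p ∈ antidiagonal n, f p.1 * f p.2) (s ^ 2) := by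
  rw [sq, ← hf.tsum_eq, tsum_mul_tsum_eq_tsum_sum_antidiagonal_of_summable_norm hnorm hnorm]
  exact (summable_norm_sum_mul_antidiagonal_of_summable_norm hnorm hnorm).of_norm.hasSum

lemma sum_antidiagonal_add_swap {M : Type*} [AddCommMonoid M] (f : ℕ → M) (n : ℕ) :
    ∑ p ∈ antidiagonal n, (f p.1 + f p.2) = 2 • ∑ k ∈ range (n + 1), f k := by
  have hswap : ∑ p ∈ antidiagonal n, f p.2 = ∑ p ∈ antidiagonal n, f p.1 :=
    Nat.sum_antidiagonal_swap (f := fun p => f p.1)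
  rw [sum_add_distrib, hswap, ← two_nsmul, Nat.sum_antidiagonal_eq_sum_range_succ_mk]

lemma sq_sum_range {R : Type*} [CommRing R] (a : ℕ → R) (N : ℕ) :
    (∑ k ∈ range N, a k) ^ 2 =
      ∑ k ∈ range N, a k ^ 2 + 2 * ∑ k ∈ range N, a k * ∑ j ∈ range k, a j := by
  induction N with
  | zero => simp
  | succ N ih => simp only [sum_range_succ]; linear_combination ih

lemma sq_eq_of_hasSum {R : Type*} [CommRing R] [TopologicalSpace R] [IsTopologicalRing R]
    [T2Space R] {a : ℕ → R} {s t u : R} (hs : HasSum a s)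
    (ht : HasSum (fun n => a n ^ 2) t) (hu : HasSum (fun n => a n * ∑ j ∈ range n, a j) u) :
    s ^ 2 = t + 2 * u := by
  refine tendsto_nhds_unique (hs.tendsto_sum_nat.pow 2) ?_
  simp_rw [sq_sum_range]
  exact ht.tendsto_sum_nat.add (hu.tendsto_sum_nat.const_mul 2)

lemma one_div_mul_one_div_eq {K : Type*} [Field K] {a b : K} (ha : a ≠ 0) (hb : b ≠ 0)
    (hab : a + b ≠ 0) : 1 / a * (1 / b) = (1 / a + 1 / b) / (a + b) := by
  field_simp; ring

lemma one_div_sq_mul_one_div_sq_eq {K : Type*} [Field K] {a b : K} (ha : a ≠ 0) (hb : b ≠ 0)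
    (hab : a + b ≠ 0) : 1 / a ^ 2 * (1 / b ^ 2) =
      (1 / a ^ 2 + 1 / b ^ 2) / (a + b) ^ 2 + 2 * (1 / a + 1 / b) / (a + b) ^ 3 := by
  field_simp; ring

lemma eq_of_hasDerivAt_zero_of_tendsto {E : Type*} [NormedAddCommGroup E] [NormedSpace ℝ E]
    {F : ℝ → E} {a b x : ℝ} {c : E}
    (hF : ∀ y ∈ Ioo a b, HasDerivAt F 0 y) (hlim : Tendsto F (𝓝[>] a) (𝓝 c))
    (hx : x ∈ Ioo a b) : F x = c := by
  have hconst : ∀ y ∈ Ioo a b, F y = F x := fun y hy =>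
    isOpen_Ioo.is_const_of_deriv_eq_zero isPreconnected_Ioo
      (fun z hz => (hF z hz).differentiableAt.differentiableWithinAt)
      (fun z hz => (hF z hz).deriv) hy hx
  refine tendsto_nhds_unique (tendsto_const_nhds.congr' ?_) hlim
  filter_upwards [Ioo_mem_nhdsGT (hx.1.trans hx.2)] with y hy
  exact (hconst y hy).symm

lemma tendsto_log_mul_of_isBigO {g : ℝ → ℝ} (hg : g =O[𝓝 0] id) :
    Tendsto (fun x => log x * g x) (𝓝 0) (𝓝 0) := by
  refine ((isBigO_refl log _).mul hg).trans_tendsto ?_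
  simpa [mul_comm] using continuous_mul_log.tendsto 0

lemma isBigO_log_one_sub : (fun x => log (1 - x)) =O[𝓝 0] id := by
  have h := ((hasDerivAt_log (x := 1 - 0) (by norm_num)).comp_const_sub 1 0).isBigO_sub
  simpa [Function.id_def] using h

lemma hasSum_one_div_succ_pow {k : ℕ} {s : ℝ} (hk : k ≠ 0)
    (h : HasSum (fun n : ℕ => 1 / (n : ℝ) ^ k) s) :
    HasSum (fun n : ℕ => 1 / ((n : ℝ) + 1) ^ k) s := by
  simpa [hk] using (hasSum_nat_add_iff' 1).mpr h

lemma summable_one_div_succ_pow {m : ℕ} (hm : 1 < m) :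
    Summable fun n : ℕ => 1 / ((n : ℝ) + 1) ^ m :=
  (summable_nat_add_iff 1).mpr (Real.summable_one_div_nat_pow.mpr hm) |>.congr fun n => by simp

noncomputable def powSeries (a : ℕ → ℝ) (x : ℝ) : ℝ := ∑' n, a n * x ^ (n + 1)

section powSeries

variable {a b : ℕ → ℝ}

lemma powSeries_zero : powSeries a 0 = 0 := by simp [powSeries]

lemma powSeries_one : powSeries a 1 = ∑' n, a n := by simp [powSeries]

lemma tsum_mul_pow_eq_powSeries_div {x : ℝ} (hx : x ≠ 0) :
    ∑' n, b n * x ^ n = powSeries b x / x := by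
  rw [eq_div_iff hx, powSeries, ← tsum_mul_right]
  exact tsum_congr fun n => by rw [mul_assoc, ← pow_succ]

lemma hasDerivAt_powSeries {C : ℝ} (hab : ∀ n : ℕ, ((n : ℝ) + 1) * a n = b n)
    (hb : ∀ n, |b n| ≤ C) {x : ℝ} (hx : |x| < 1) :
    HasDerivAt (powSeries a) (∑' n, b n * x ^ n) x := by
  obtain ⟨r, hxr, hr1⟩ := exists_between hx
  have hr0 : 0 < r := (abs_nonneg x).trans_lt hxr
  unfold powSeries
  refine hasDerivAt_tsum_of_isPreconnected (g := fun n y => a n * y ^ (n + 1))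
    (g' := fun n y => b n * y ^ n)
    (u := fun n => C * r ^ n) ((summable_geometric_of_lt_one hr0.le hr1).mul_left C)
    isOpen_Ioo isPreconnected_Ioo (fun n y _ => ?_) (fun n y hy => ?_)
    (Set.mem_Ioo.mpr ⟨by linarith, by linarith⟩ : (0 : ℝ) ∈ Ioo (-r) r) (by simp)
    (abs_lt.mp hxr)
  · simpa [← hab n, mul_assoc, mul_comm, mul_left_comm] using
      (hasDerivAt_pow (n + 1) y).const_mul (a n)
  · rw [norm_mul, norm_pow, Real.norm_eq_abs, Real.norm_eq_abs]
    exact mul_le_mul (hb n)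
      (pow_le_pow_left₀ (abs_nonneg y) (abs_le.mpr ⟨hy.1.le, hy.2.le⟩) n)
      (by positivity) ((abs_nonneg _).trans (hb n))

lemma isBigO_powSeries {C : ℝ} (hab : ∀ n : ℕ, ((n : ℝ) + 1) * a n = b n)
    (hb : ∀ n, |b n| ≤ C) : powSeries a =O[𝓝 0] id := by
  simpa [powSeries_zero, Function.id_def] using
    (hasDerivAt_powSeries hab hb (x := 0) (by simp)).isBigO_sub

lemma tendsto_powSeries_one_sub (ha : Summable fun n => |a n|) :
    Tendsto (fun x => powSeries a (1 - x)) (𝓝[>] 0) (𝓝 (∑' n, a n)) := by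
  have hcont : ContinuousOn (powSeries a) (Icc 0 1) :=
    continuousOn_tsum (fun n => by fun_prop) ha fun n x hx => by
      rw [norm_mul, norm_pow, Real.norm_eq_abs, Real.norm_eq_abs, abs_of_nonneg hx.1]
      exact mul_le_of_le_one_right (abs_nonneg _) (pow_le_one₀ hx.1 hx.2)
  rw [← powSeries_one]
  refine (hcont 1 ⟨zero_le_one, le_rfl⟩).tendsto.comp (tendsto_nhdsWithin_iff.mpr ⟨?_, ?_⟩)
  · exact ((continuous_const.sub continuous_id).tendsto' 0 1 (by simp)).mono_left
      nhdsWithin_le_nhds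
  · filter_upwards [Ioo_mem_nhdsGT one_pos] with x hx
    exact ⟨by linarith [hx.2], by linarith [hx.1]⟩

lemma abs_powSeries_le_neg_log (ha : ∀ n, |a n| ≤ 1 / ((n : ℝ) + 1)) {t : ℝ} (ht0 : 0 ≤ t)
    (ht1 : t < 1) : |powSeries a t| ≤ -log (1 - t) := by
  rw [← Real.norm_eq_abs, powSeries]
  refine tsum_of_norm_bounded (hasSum_pow_div_log_of_abs_lt_one (abs_lt.mpr ⟨by linarith, ht1⟩))
    fun n => ?_
  rw [norm_mul, norm_pow, Real.norm_eq_abs, Real.norm_eq_abs, abs_of_nonneg ht0, div_eq_mul_one_div,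
    mul_comm]
  exact mul_le_mul_of_nonneg_left (ha n) (by positivity)

lemma tendsto_log_one_sub_mul_powSeries_one_sub (ha : ∀ n, |a n| ≤ 1 / ((n : ℝ) + 1)) :
    Tendsto (fun x => log (1 - x) * powSeries a (1 - x)) (𝓝[>] 0) (𝓝 0) := by
  have hbound : (fun x => log (1 - x) * powSeries a (1 - x)) =O[𝓝[>] 0]
      fun x => log x * log (1 - x) := by
    refine IsBigO.of_bound 1 ?_
    filter_upwards [Ioo_mem_nhdsGT one_pos] with x hx
    have h := abs_powSeries_le_neg_log ha (t := 1 - x) (by linarith [hx.2]) (by linarith [hx.1])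
    rw [sub_sub_cancel, ← abs_of_neg (log_neg hx.1 hx.2)] at h
    rw [Real.norm_eq_abs, Real.norm_eq_abs, abs_mul, abs_mul, one_mul, mul_comm]
    exact mul_le_mul_of_nonneg_right h (abs_nonneg _)
  exact hbound.trans_tendsto
    ((tendsto_log_mul_of_isBigO isBigO_log_one_sub).mono_left nhdsWithin_le_nhds)

end powSeries

lemma H_nonneg (n : ℕ) : 0 ≤ H n :=
  sum_nonneg fun _ _ => by positivity

lemma H_le (n : ℕ) : H n ≤ n := by
  calc H n ≤ ∑ _k ∈ range n, (1 : ℝ) :=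
        sum_le_sum fun k _ => div_le_one_of_le₀ (by simp) (by positivity)
    _ = n := by simp

lemma abs_H_div_pow_succ_le (m n : ℕ) :
    |H n / ((n : ℝ) + 1) ^ (m + 1)| ≤ 1 / ((n : ℝ) + 1) ^ m := by
  rw [abs_of_nonneg (by have := H_nonneg n; positivity), pow_succ', ← div_div]
  gcongr
  exact div_le_one_of_le₀ (by linarith [H_le n]) (by positivity)

lemma abs_H_div_pow_succ_le_one (m n : ℕ) : |H n / ((n : ℝ) + 1) ^ (m + 1)| ≤ 1 :=
  (abs_H_div_pow_succ_le m n).trans (div_le_one_of_le₀ (one_le_pow₀ (by simp)) (by positivity))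

lemma cast_add_one_add_cast_add_one {n : ℕ} {p : ℕ × ℕ} (hp : p ∈ antidiagonal n) :
    (p.1 : ℝ) + 1 + ((p.2 : ℝ) + 1) = (n : ℝ) + 2 := by
  rw [← mem_antidiagonal.mp hp]; push_cast; ring

lemma sum_antidiagonal_one_div_mul (n : ℕ) :
    ∑ p ∈ antidiagonal n, 1 / ((p.1 : ℝ) + 1) * (1 / ((p.2 : ℝ) + 1)) =
      2 * H (n + 1) / ((n : ℝ) + 2) := by
  have hterm : ∀ p ∈ antidiagonal n, 1 / ((p.1 : ℝ) + 1) * (1 / ((p.2 : ℝ) + 1)) =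
      (1 / ((p.1 : ℝ) + 1) + 1 / ((p.2 : ℝ) + 1)) / ((n : ℝ) + 2) := by
    intro p hp
    rw [one_div_mul_one_div_eq (by positivity) (by positivity) (by positivity),
      cast_add_one_add_cast_add_one hp]
  rw [sum_congr rfl hterm, ← sum_div,
    sum_antidiagonal_add_swap (fun k : ℕ => 1 / ((k : ℝ) + 1)), nsmul_eq_mul]
  rfl

lemma sum_antidiagonal_one_div_sq_mul (n : ℕ) :
    ∑ p ∈ antidiagonal n, 1 / ((p.1 : ℝ) + 1) ^ 2 * (1 / ((p.2 : ℝ) + 1) ^ 2) =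
      2 * H2 (n + 1) / ((n : ℝ) + 2) ^ 2 + 4 * H (n + 1) / ((n : ℝ) + 2) ^ 3 := by
  have hterm : ∀ p ∈ antidiagonal n, 1 / ((p.1 : ℝ) + 1) ^ 2 * (1 / ((p.2 : ℝ) + 1) ^ 2) =
      (1 / ((p.1 : ℝ) + 1) ^ 2 + 1 / ((p.2 : ℝ) + 1) ^ 2) / ((n : ℝ) + 2) ^ 2 +
        2 * (1 / ((p.1 : ℝ) + 1) + 1 / ((p.2 : ℝ) + 1)) / ((n : ℝ) + 2) ^ 3 := by
    intro p hp
    rw [one_div_sq_mul_one_div_sq_eq (by positivity) (by positivity) (by positivity),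
      cast_add_one_add_cast_add_one hp]
  rw [sum_congr rfl hterm, sum_add_distrib, ← sum_div, ← sum_div, ← mul_sum,
    sum_antidiagonal_add_swap (fun k : ℕ => 1 / ((k : ℝ) + 1) ^ 2),
    sum_antidiagonal_add_swap (fun k : ℕ => 1 / ((k : ℝ) + 1)), nsmul_eq_mul, nsmul_eq_mul]
  simp only [H, H2]
  ring

lemma hasSum_H_div_mul_pow {x : ℝ} (hx : |x| < 1) :
    HasSum (fun n => H n / ((n : ℝ) + 1) * x ^ (n + 1)) (log (1 - x) ^ 2 / 2) := by
  set f : ℕ → ℝ := fun n => x ^ (n + 1) / ((n : ℝ) + 1)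
  have habs : Summable fun n => |f n| :=
    (hasSum_pow_div_log_of_abs_lt_one (by rwa [abs_abs])).summable.congr fun n => by
      simp [f, abs_div, abs_pow, abs_of_nonneg (by positivity : (0 : ℝ) ≤ (n : ℝ) + 1)]
  have hprod := hasSum_sum_antidiagonal_mul_self (hasSum_pow_div_log_of_abs_lt_one hx) habs
  have hinner : ∀ n, ∑ p ∈ antidiagonal n, f p.1 * f p.2 =
      2 * (H (n + 1) / (((n + 1 : ℕ) : ℝ) + 1) * x ^ (n + 1 + 1)) := by
    intro n
    have hterm : ∀ p ∈ antidiagonal n, f p.1 * f p.2 =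
        1 / ((p.1 : ℝ) + 1) * (1 / ((p.2 : ℝ) + 1)) * x ^ (n + 2) := by
      intro p hp
      rw [← mem_antidiagonal.mp hp]
      simp only [f]; ring
    rw [sum_congr rfl hterm, ← sum_mul, sum_antidiagonal_one_div_mul]
    push_cast; ring
  have hshift : HasSum (fun n => 2 * (H (n + 1) / (((n + 1 : ℕ) : ℝ) + 1) * x ^ (n + 1 + 1)))
      (log (1 - x) ^ 2) := by
    rw [neg_sq] at hprod
    exact hprod.congr_fun fun n => (hinner n).symm
  have h2 := hasSum_of_hasSum_succ (f := fun n => 2 * (H n / ((n : ℝ) + 1) * x ^ (n + 1)))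
    (by simp [H]) hshift
  simpa only [mul_div_cancel_left₀ _ (two_ne_zero' ℝ)] using h2.div_const 2

lemma Li_eq_powSeries (m : ℕ) : Li m = powSeries fun n => 1 / ((n : ℝ) + 1) ^ m :=
  funext fun x => tsum_congr fun n => by ring

lemma Li21_eq_powSeries : Li21 = powSeries fun n => H n / ((n : ℝ) + 1) ^ 2 :=
  funext fun x => tsum_congr fun n => by ring

lemma Li31_eq_powSeries : Li31 = powSeries fun n => H n / ((n : ℝ) + 1) ^ 3 :=
  funext fun x => tsum_congr fun n => by ring

lemma cast_succ_mul_div_pow_succ (c : ℝ) (m n : ℕ) :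
    ((n : ℝ) + 1) * (c / ((n : ℝ) + 1) ^ (m + 1)) = c / ((n : ℝ) + 1) ^ m := by
  field_simp; ring

lemma hasDerivAt_Li_succ (m : ℕ) {x : ℝ} (hx : |x| < 1) (hx0 : x ≠ 0) :
    HasDerivAt (Li (m + 1)) (Li m x / x) x := by
  have h := hasDerivAt_powSeries (C := 1) (fun n => cast_succ_mul_div_pow_succ 1 m n)
    (fun n => ?_) hx
  · rwa [tsum_mul_pow_eq_powSeries_div hx0, ← Li_eq_powSeries, ← Li_eq_powSeries] at h
  · rw [abs_of_nonneg (by positivity)]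
    exact div_le_one_of_le₀ (one_le_pow₀ (by simp)) (by positivity)

lemma Li_one_eq {x : ℝ} (hx : |x| < 1) : Li 1 x = -log (1 - x) := by
  simpa [Li] using (hasSum_pow_div_log_of_abs_lt_one hx).tsum_eq

lemma hasDerivAt_Li_two {x : ℝ} (hx : |x| < 1) (hx0 : x ≠ 0) :
    HasDerivAt (Li 2) (-log (1 - x) / x) x := by
  simpa [Li_one_eq hx] using hasDerivAt_Li_succ 1 hx hx0

lemma hasDerivAt_Li21 {x : ℝ} (hx : |x| < 1) (hx0 : x ≠ 0) :
    HasDerivAt Li21 (log (1 - x) ^ 2 / 2 / x) x := by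
  have h := hasDerivAt_powSeries (fun n => cast_succ_mul_div_pow_succ (H n) 1 n)
    (abs_H_div_pow_succ_le_one 0) hx
  rwa [tsum_mul_pow_eq_powSeries_div hx0, ← Li21_eq_powSeries, powSeries,
    (by simpa using hasSum_H_div_mul_pow hx : HasSum _ _).tsum_eq] at h

lemma hasDerivAt_Li31 {x : ℝ} (hx : |x| < 1) (hx0 : x ≠ 0) :
    HasDerivAt Li31 (Li21 x / x) x := by
  have h := hasDerivAt_powSeries (fun n => cast_succ_mul_div_pow_succ (H n) 2 n)
    (abs_H_div_pow_succ_le_one 1) hx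
  rwa [tsum_mul_pow_eq_powSeries_div hx0, ← Li31_eq_powSeries, ← Li21_eq_powSeries] at h

lemma isBigO_Li21 : Li21 =O[𝓝 0] id := by
  rw [Li21_eq_powSeries]
  exact isBigO_powSeries (fun n => cast_succ_mul_div_pow_succ (H n) 1 n)
    (abs_H_div_pow_succ_le_one 0)

lemma tendsto_Li31_zero : Tendsto Li31 (𝓝 0) (𝓝 0) := by
  rw [Li31_eq_powSeries]
  exact (isBigO_powSeries (fun n => cast_succ_mul_div_pow_succ (H n) 2 n)
    (abs_H_div_pow_succ_le_one 1)).trans_tendsto tendsto_id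

lemma tendsto_Li_three_one_sub : Tendsto (fun x => Li 3 (1 - x)) (𝓝[>] 0) (𝓝 zeta3) := by
  rw [Li_eq_powSeries]
  exact tendsto_powSeries_one_sub ((summable_one_div_succ_pow (by norm_num)).congr fun n =>
    (abs_of_nonneg (by positivity)).symm)

lemma tendsto_Li31_one_sub : Tendsto (fun x => Li31 (1 - x)) (𝓝[>] 0) (𝓝 zeta31) := by
  rw [Li31_eq_powSeries]
  exact tendsto_powSeries_one_sub (Summable.of_nonneg_of_le (fun n => abs_nonneg _)
    (abs_H_div_pow_succ_le 2) (summable_one_div_succ_pow (by norm_num)))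

lemma tendsto_log_one_sub_mul_Li_two_one_sub :
    Tendsto (fun x => log (1 - x) * Li 2 (1 - x)) (𝓝[>] 0) (𝓝 0) := by
  rw [Li_eq_powSeries]
  refine tendsto_log_one_sub_mul_powSeries_one_sub fun n => ?_
  rw [abs_of_nonneg (by positivity)]
  exact one_div_le_one_div_of_le (by positivity) (le_self_pow₀ (by simp) two_ne_zero)

lemma tendsto_log_one_sub_mul_Li21_one_sub :
    Tendsto (fun x => log (1 - x) * Li21 (1 - x)) (𝓝[>] 0) (𝓝 0) := by
  rw [Li21_eq_powSeries]
  exact tendsto_log_one_sub_mul_powSeries_one_sub fun n => by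
    simpa using abs_H_div_pow_succ_le 1 n

lemma tendsto_log_mul_log_one_sub : Tendsto (fun x => log x * log (1 - x)) (𝓝 0) (𝓝 0) :=
  tendsto_log_mul_of_isBigO isBigO_log_one_sub

lemma tendsto_log_one_sub : Tendsto (fun x => log (1 - x)) (𝓝 0) (𝓝 0) :=
  isBigO_log_one_sub.trans_tendsto tendsto_id

lemma Li21_eq {x : ℝ} (hx0 : 0 < x) (hx1 : x < 1) :
    Li21 x = zeta3 - Li 3 (1 - x) + log (1 - x) * Li 2 (1 - x) +
      1 / 2 * log x * log (1 - x) ^ 2 := by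
  set F : ℝ → ℝ := fun y => Li21 y - (zeta3 - Li 3 (1 - y) + log (1 - y) * Li 2 (1 - y) +
      1 / 2 * log y * log (1 - y) ^ 2)
  suffices F x = 0 by simp only [F] at this; linarith
  refine eq_of_hasDerivAt_zero_of_tendsto (fun y hy => ?_) ?_ ⟨hx0, hx1⟩
  · have hy1 : |y| < 1 := abs_lt.mpr ⟨by linarith [hy.1], hy.2⟩
    have hy1' : |1 - y| < 1 := abs_lt.mpr ⟨by linarith [hy.2], by linarith [hy.1]⟩
    have hy0 : y ≠ 0 := hy.1.ne'
    have hy0' : 1 - y ≠ 0 := by linarith [hy.2]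
    have dLi21 := hasDerivAt_Li21 hy1 hy0
    have dLi3 := (hasDerivAt_Li_succ 2 hy1' hy0').comp_const_sub 1 y
    have dLi2 := (hasDerivAt_Li_two hy1' hy0').comp_const_sub 1 y
    have dlog := hasDerivAt_log hy0
    have dlog' := (hasDerivAt_log hy0').comp_const_sub 1 y
    refine (dLi21.sub (((dLi3.const_sub zeta3).add (dlog'.mul dLi2)).add
      ((dlog.const_mul (1 / 2)).mul (dlog'.pow 2)))).congr_deriv ?_
    simp only [sub_sub_cancel, Pi.pow_apply]
    field_simp
    ring
  · have hLi21 : Tendsto Li21 (𝓝[>] 0) (𝓝 0) :=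
      (isBigO_Li21.trans_tendsto tendsto_id).mono_left nhdsWithin_le_nhds
    have hlog : Tendsto (fun y => 1 / 2 * log y * log (1 - y) ^ 2) (𝓝[>] 0) (𝓝 0) := by
      have h := (tendsto_log_mul_log_one_sub.const_mul (1 / 2)).mul tendsto_log_one_sub
      simp only [mul_zero] at h
      refine (h.congr fun y => ?_).mono_left nhdsWithin_le_nhds
      ring
    have hbracket := (((tendsto_const_nhds (x := zeta3)).sub tendsto_Li_three_one_sub).add
      tendsto_log_one_sub_mul_Li_two_one_sub).add hlog
    convert hLi21.sub hbracket using 2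
    ring

lemma Li31_add_Li31_one_sub {x : ℝ} (hx0 : 0 < x) (hx1 : x < 1) :
    Li31 x + Li31 (1 - x) = zeta31 + log x * Li21 x + log (1 - x) * Li21 (1 - x) -
      1 / 4 * (log x * log (1 - x)) ^ 2 := by
  set F : ℝ → ℝ := fun y => Li31 y + Li31 (1 - y) -
      (log y * Li21 y + log (1 - y) * Li21 (1 - y) - 1 / 4 * (log y * log (1 - y)) ^ 2)
  suffices F x = zeta31 by simp only [F] at this; linarith
  refine eq_of_hasDerivAt_zero_of_tendsto (fun y hy => ?_) ?_ ⟨hx0, hx1⟩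
  · have hy1 : |y| < 1 := abs_lt.mpr ⟨by linarith [hy.1], hy.2⟩
    have hy1' : |1 - y| < 1 := abs_lt.mpr ⟨by linarith [hy.2], by linarith [hy.1]⟩
    have hy0 : y ≠ 0 := hy.1.ne'
    have hy0' : 1 - y ≠ 0 := by linarith [hy.2]
    have dLi31 := hasDerivAt_Li31 hy1 hy0
    have dLi31' := (hasDerivAt_Li31 hy1' hy0').comp_const_sub 1 y
    have dLi21 := hasDerivAt_Li21 hy1 hy0
    have dLi21' := (hasDerivAt_Li21 hy1' hy0').comp_const_sub 1 y
    have dlog := hasDerivAt_log hy0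
    have dlog' := (hasDerivAt_log hy0').comp_const_sub 1 y
    refine ((dLi31.add dLi31').sub (((dlog.mul dLi21).add (dlog'.mul dLi21')).sub
      (((dlog.mul dlog').pow 2).const_mul (1 / 4)))).congr_deriv ?_
    rw [sub_sub_cancel, Pi.mul_apply]
    field_simp
    ring
  · have h := ((tendsto_Li31_zero.mono_left nhdsWithin_le_nhds).add tendsto_Li31_one_sub).sub
      ((((tendsto_log_mul_of_isBigO isBigO_Li21).mono_left nhdsWithin_le_nhds).add
        tendsto_log_one_sub_mul_Li21_one_sub).sub
        (((tendsto_log_mul_log_one_sub.pow 2).const_mul (1 / 4)).mono_left nhdsWithin_le_nhds))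
    convert h using 2
    ring

lemma zeta31_eq : zeta31 = π ^ 4 / 360 := by
  set a : ℕ → ℝ := fun n => 1 / ((n : ℝ) + 1) ^ 2
  have hζ2 : HasSum a (π ^ 2 / 6) := hasSum_one_div_succ_pow two_ne_zero hasSum_zeta_two
  have hζ4 : HasSum (fun n => a n ^ 2) (π ^ 4 / 90) := by
    convert hasSum_one_div_succ_pow four_ne_zero hasSum_zeta_four using 2 with n
    simp only [a, div_pow, one_pow, ← pow_mul]
  have hζ31 : HasSum (fun n => H n / ((n : ℝ) + 1) ^ 3) zeta31 :=
    (Summable.of_nonneg_of_le (fun n => div_nonneg (H_nonneg n) (by positivity))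
      (fun n => (le_abs_self _).trans (abs_H_div_pow_succ_le 2 n))
      (summable_one_div_succ_pow (by norm_num))).hasSum
  have hprod := hasSum_sum_antidiagonal_mul_self hζ2
    (hζ2.summable.congr fun n => (abs_of_nonneg (by positivity)).symm)
  have hshuffle : HasSum (fun n => 2 * (a n * H2 n) + 4 * (H n / ((n : ℝ) + 1) ^ 3))
      ((π ^ 2 / 6) ^ 2) := by
    refine hasSum_of_hasSum_succ (by simp [H, H2]) (hprod.congr_fun fun n => ?_)
    simp only [a]
    rw [sum_antidiagonal_one_div_sq_mul]
    push_cast; ring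
  have hζ22 : HasSum (fun n => a n * ∑ j ∈ range n, a j)
      (((π ^ 2 / 6) ^ 2 - 4 * zeta31) / 2) := by
    refine ((hshuffle.sub (hζ31.mul_left 4)).div_const 2).congr_fun fun n => ?_
    show _ = (2 * (a n * ∑ j ∈ range n, a j) + _ - _) / 2
    ring
  linarith [sq_eq_of_hasSum hζ2 hζ4 hζ22]

theorem stmt14 (x : ℝ) (hx0 : 0 < x) (hx1 : x < 1) :
    (Li31 x + Li31 (1 - x) =
      Real.log x * (zeta3 - Li 3 (1 - x) + Real.log (1 - x) * Li 2 (1 - x)) +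
        zeta31 + Real.log (1 - x) * Li21 (1 - x) +
        1 / 4 * Real.log x ^ 2 * Real.log (1 - x) ^ 2) ∧ zeta31 = π ^ 4 / 360 := by
  refine ⟨?_, zeta31_eq⟩
  rw [Li31_add_Li31_one_sub hx0 hx1, Li21_eq hx0 hx1]
  ring
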